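/- Let a,b≥0 with ab<1. Fix d∈ℕ, reals 0<θ₁<…<θ_d<θ_{d+1}=1, and reals 0<u_j<v_j for j=1,…,d+1 satisfying v_{d+1}−u_j < 1−θ_j for j=1,…,d. Fix r∈ℕ and ε>0. Then there exists N₀∈ℕ such that for all N≥N₀, P_N^{(0,a,b,0,0)}( Sep_N ∩ Val_N ) ≥ e^{−N^{4/5}} · P_N^{(0,a,b,0,0)}( Val_N ), where Val_N := {λ∈TL_N : h_N[λ](θ_j) ∈ (u_j,v_j) for j=1,…,d+1} and Sep_N := {λ∈TL_N : #{j∈{0,…,N} : λ₁(j)−λ₂(j) ≤ r} ≤ ⌈εN⌉}. Equivalently, whenever Val_N has positive probability, the conditional probability of Sep_N given Val_N is at least e^{−N^{4/5}}. -/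

import Mathlib

/-- A Bernoulli path on `{0,…,N}`: increments in `{0,1}`. -/
def IsBPath (N : ℕ) (L : Fin (N+1) → ℤ) : Prop :=
  ∀ j : Fin N, L j.succ = L j.castSucc ∨ L j.succ = L j.castSucc + 1

/-- The two-layer configuration space `TL_N`. -/
def TLset (N : ℕ) : Set ((Fin (N+1) → ℤ) × (Fin (N+1) → ℤ)) :=
  {p | p.1 0 = 0 ∧ (∀ j, p.2 j ≤ p.1 j) ∧ IsBPath N p.1 ∧ IsBPath N p.2}

/-- The open TASEP two-layer weight `wt_N^{(0,a,b,0,0)}(λ) = a^{λ₁(0)-λ₂(0)} b^{λ₁(N)-λ₂(N)}`. -/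
noncomputable def twt0 (N : ℕ) (a b : ℝ) (p : (Fin (N+1) → ℤ) × (Fin (N+1) → ℤ)) : ℝ :=
  a ^ (p.1 0 - p.2 0).toNat * b ^ (p.1 (Fin.last N) - p.2 (Fin.last N)).toNat

/-- The probability of the event `S` under the open TASEP two-layer measure
`P_N^{(0,a,b,0,0)}`. -/
noncomputable def Ptl0 (N : ℕ) (a b : ℝ) (S : Set ((Fin (N+1) → ℤ) × (Fin (N+1) → ℤ))) : ℝ :=
  (∑' p : TLset N, S.indicator (twt0 N a b) p.val) / ∑' p : TLset N, twt0 N a b p.val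

/-- The rescaled height profile `h_N[λ] : [0,1] → ℝ` of the first layer: it takes the value
`λ₁(k)/N` at `k/N` and is linearly interpolated in between. -/
noncomputable def heightTL (N : ℕ) (lam : Fin (N+1) → ℤ) (t : ℝ) : ℝ :=
  (N : ℝ)⁻¹ * ((lam 0 : ℝ) +
    ∑ k : Fin N, ((lam k.succ - lam k.castSucc : ℤ) : ℝ) * min 1 (max 0 ((N : ℝ) * t - (k : ℕ))))

/-!
The map `separate c` (with `c = r + 1`) lifts the top layer and lowers the bottom layer so that
they are `c` apart on the sites `c, …, N - c`, without moving the four endpoints; hence it keeps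
the weight and lands in the separation event. It only changes the top layer before its `c`-th
up-step and after its `c`-th-to-last flat step, and for large `N` the windows force all `θ_j N`
to lie strictly in between, so the window event is preserved too. A configuration is recovered
from its image together with the times at which the up-count and the flat-count profiles of
both layers first exceed `0, …, c - 1`: at most `(N + 2) ^ (4 c)` possible data. Summing over
fibres gives `P(Val) ≤ (N + 2) ^ (4 c) P(Sep ∩ Val)`, and `(N + 2) ^ (4 c) ≤ e^{N^{4/5}}`
eventually.
-/

open Finset

theorem Monotone.le_iff_of_card_filter_le_eq {α β : Type*} [LinearOrder α] [Fintype α]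
    [LinearOrder β] {g g' : α → β} (hg : Monotone g) (hg' : Monotone g') {i : β}
    (h : #{x | g x ≤ i} = #{x | g' x ≤ i}) (x : α) : g x ≤ i ↔ g' x ≤ i := by
  -- `{y | g y ≤ i}` is an initial segment, so its cardinality decides whether it contains `x`
  have key : ∀ {g g' : α → β}, Monotone g → Monotone g' → g x ≤ i → ¬ g' x ≤ i →
      #{y | g' y ≤ i} < #{y | g y ≤ i} := by
    intro g g' hg hg' hgx hg'x
    calc #{y | g' y ≤ i} ≤ #{y | y < x} := by
          refine card_le_card fun y hy => ?_
          simp only [mem_filter, mem_univ, true_and] at hy ⊢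
          exact lt_of_not_ge fun hxy => hg'x ((hg' hxy).trans hy)
      _ < #{y | y ≤ x} := by
          refine card_lt_card ⟨fun y hy => ?_, fun hsub => ?_⟩
          · simp only [mem_filter, mem_univ, true_and] at hy ⊢
            exact hy.le
          · simpa using hsub (by simp : x ∈ _)
      _ ≤ #{y | g y ≤ i} := by
          refine card_le_card fun y hy => ?_
          simp only [mem_filter, mem_univ, true_and] at hy ⊢
          exact (hg hy).trans hgx
  exact ⟨fun hgx => not_not.1 fun hg'x => (key hg hg' hgx hg'x).ne h.symm,
    fun hg'x => not_not.1 fun hgx => (key hg' hg hg'x hgx).ne h⟩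

theorem Int.min_natCast_eq_of_forall_le_iff {x y : ℤ} {c : ℕ} (hx : 0 ≤ x) (hy : 0 ≤ y)
    (h : ∀ i : ℕ, i < c → (x ≤ i ↔ y ≤ i)) : min x c = min y c := by
  wlog hxy : x < y generalizing x y
  · rcases (not_lt.1 hxy).lt_or_eq with hlt | rfl
    · exact (this hy hx (fun i hi => (h i hi).symm) hlt).symm
    · rfl
  by_cases hxc : x < c
  · have := (h x.toNat (by omega)).1 (by omega)
    omega
  · omega

theorem tsum_indicator_le_card_mul {α D : Type*} [Fintype D] {w : α → ℝ} (hw : 0 ≤ w)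
    {S T : Set α} (hTS : T ⊆ S) {f : α → α} (g : α → D) (hf : Set.MapsTo f S T)
    (hwf : ∀ p ∈ S, w (f p) = w p) (hinj : Set.InjOn (fun p => (f p, g p)) S) :
    ∑' p, S.indicator w p ≤ Fintype.card D * ∑' p, T.indicator w p := by
  classical
  have hind : ∀ U : Set α, 0 ≤ U.indicator w := fun U => Set.indicator_nonneg fun p _ => hw p
  -- a non-summable `∑'` is `0`; `T ⊆ S` passes summability from `S` on to `T`
  by_cases hS : Summable (S.indicator w)
  swap
  · rw [tsum_eq_zero_of_not_summable hS]
    exact mul_nonneg (Nat.cast_nonneg _) (tsum_nonneg (hind T))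
  let fiber : D → Set α := fun e => S ∩ g ⁻¹' {e}
  have hsum : ∀ U ⊆ S, Summable (U.indicator w) := fun U hU =>
    hS.of_nonneg_of_le (hind U) (Set.indicator_le_indicator_of_subset hU hw)
  have hfiber : ∀ e, ∑' p, (fiber e).indicator w p ≤ ∑' p, T.indicator w p := by
    intro e
    rw [← _root_.tsum_subtype, ← _root_.tsum_subtype]
    refine Summable.tsum_le_tsum_of_inj (fun q : fiber e => (⟨f q, hf q.2.1⟩ : T)) ?_
      (fun t _ => hw t) (fun q => (hwf q q.2.1).ge)
      (summable_subtype_iff_indicator.2 (hsum _ Set.inter_subset_left))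
      (summable_subtype_iff_indicator.2 (hsum T hTS))
    intro q q' hqq
    have hg : g q = g q' := q.2.2.trans q'.2.2.symm
    exact Subtype.ext (hinj q.2.1 q'.2.1 (Prod.ext (congrArg Subtype.val hqq) hg))
  calc ∑' p, S.indicator w p = ∑' p, ∑ e, (fiber e).indicator w p := by
        congr 1; ext p
        by_cases hp : p ∈ S <;> simp [fiber, Set.indicator_apply, hp]
    _ = ∑ e, ∑' p, (fiber e).indicator w p :=
        Summable.tsum_finsetSum fun e _ => hsum _ Set.inter_subset_left
    _ ≤ ∑ _e : D, ∑' p, T.indicator w p := sum_le_sum fun e _ => hfiber e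
    _ = Fintype.card D * ∑' p, T.indicator w p := by simp

theorem eventually_le_natCast_mul (C : ℝ) {x : ℝ} (hx : 0 < x) :
    ∀ᶠ N : ℕ in Filter.atTop, C ≤ N * x :=
  (tendsto_natCast_atTop_atTop.atTop_mul_const hx).eventually_ge_atTop C

theorem eventually_pow_le_exp_rpow (k : ℕ) {α : ℝ} (hα : 0 < α) :
    ∀ᶠ N : ℕ in Filter.atTop, ((N : ℝ) + 2) ^ k ≤ Real.exp ((N : ℝ) ^ α) := by
  have hlog := ((isLittleO_log_rpow_atTop hα).const_mul_left (2 * k : ℝ)).bound one_pos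
  filter_upwards [tendsto_natCast_atTop_atTop.eventually hlog, Filter.eventually_ge_atTop 2]
    with N hN (hN2 : 2 ≤ N)
  have h2 : (2 : ℝ) ≤ N := by exact_mod_cast hN2
  have hlogN : 0 ≤ Real.log N := Real.log_nonneg (by linarith)
  rw [Real.norm_of_nonneg (by positivity), Real.norm_of_nonneg (by positivity), one_mul] at hN
  calc ((N : ℝ) + 2) ^ k ≤ ((N : ℝ) ^ 2) ^ k := by gcongr; nlinarith
    _ = Real.exp (Real.log (((N : ℝ) ^ 2) ^ k)) := (Real.exp_log (by positivity)).symm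
    _ = Real.exp (2 * k * Real.log N) := by
        rw [Real.log_pow, Real.log_pow]
        push_cast
        congr 1
        ring
    _ ≤ Real.exp ((N : ℝ) ^ α) := Real.exp_le_exp.2 hN

theorem Fin.card_filter_lt_or_lt_add_le (N c : ℕ) :
    #{j : Fin (N+1) | (j : ℕ) < c ∨ N < j + c} ≤ 2 * c := by
  have hrev : #{j : Fin (N+1) | N < j + c} ≤ #{j : Fin (N+1) | (j : ℕ) < c} :=
    card_le_card_of_injOn Fin.rev (fun j hj => by simp at hj ⊢; omega) Fin.rev_injective.injOn
  have hlt : #{j : Fin (N+1) | (j : ℕ) < c} ≤ c :=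
    Fin.card_filter_val_lt.trans_le (min_le_right _ _)
  calc #{j : Fin (N+1) | (j : ℕ) < c ∨ N < j + c}
      ≤ #{j : Fin (N+1) | (j : ℕ) < c} + #{j : Fin (N+1) | N < j + c} := by
        rw [filter_or]
        exact card_union_le _ _
    _ ≤ 2 * c := by omega

namespace TwoLayer

variable {N : ℕ}

section Paths

variable {L M : Fin (N+1) → ℤ}

def ups (L : Fin (N+1) → ℤ) (k : Fin (N+1)) : ℤ := L k - L 0

def flatsAfter (L : Fin (N+1) → ℤ) (k : Fin (N+1)) : ℤ :=
  ((N : ℤ) - k) - (L (Fin.last N) - L k)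

theorem _root_.IsBPath.monotone_ups (hL : IsBPath N L) : Monotone (ups L) :=
  Fin.monotone_iff_le_succ.2 fun j => by have := hL j; simp only [ups]; omega

theorem _root_.IsBPath.antitone_flatsAfter (hL : IsBPath N L) : Antitone (flatsAfter L) :=
  Fin.antitone_iff_succ_le.2 fun j => by
    have := hL j
    simp only [flatsAfter, Fin.val_succ, Fin.val_castSucc]
    push_cast
    omega

theorem _root_.IsBPath.ups_nonneg (hL : IsBPath N L) (k : Fin (N+1)) : 0 ≤ ups L k := by
  simpa [ups] using hL.monotone_ups (Fin.zero_le k)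

theorem _root_.IsBPath.flatsAfter_nonneg (hL : IsBPath N L) (k : Fin (N+1)) :
    0 ≤ flatsAfter L k := by
  simpa [flatsAfter] using hL.antitone_flatsAfter (Fin.le_last k)

/-- For monotone `g`, `levelCounts c g i` is the first time at which `g` exceeds `i`. -/
def levelCounts (c : ℕ) (g : Fin (N+1) → ℤ) : Fin c → Fin (N+2) := fun i =>
  ⟨#{k | g k ≤ i}, Nat.lt_succ_of_le ((card_le_univ _).trans (by simp))⟩

theorem min_eq_min_of_levelCounts_eq {c : ℕ} {g g' : Fin (N+1) → ℤ} (hg : Monotone g)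
    (hg' : Monotone g') (hg0 : 0 ≤ g) (hg'0 : 0 ≤ g') (h : levelCounts c g = levelCounts c g')
    (k : Fin (N+1)) : min (g k) c = min (g' k) c :=
  Int.min_natCast_eq_of_forall_le_iff (hg0 k) (hg'0 k) fun i hi =>
    hg.le_iff_of_card_filter_le_eq hg' (congrArg Fin.val (congrFun h ⟨i, hi⟩)) k

abbrev PathData (N c : ℕ) := (Fin c → Fin (N+2)) × (Fin c → Fin (N+2))

def pathData (c : ℕ) (L : Fin (N+1) → ℤ) : PathData N c :=
  (levelCounts c (ups L), levelCounts c (flatsAfter L ∘ Fin.rev))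

theorem min_eq_min_of_pathData_eq {c : ℕ} (hL : IsBPath N L) (hM : IsBPath N M)
    (h : pathData c L = pathData c M) (k : Fin (N+1)) :
    min (ups L k) c = min (ups M k) c ∧ min (flatsAfter L k) c = min (flatsAfter M k) c := by
  refine ⟨min_eq_min_of_levelCounts_eq hL.monotone_ups hM.monotone_ups hL.ups_nonneg
    hM.ups_nonneg (congrArg Prod.fst h) k, ?_⟩
  simpa using min_eq_min_of_levelCounts_eq (hL.antitone_flatsAfter.comp Fin.rev_anti)
    (hM.antitone_flatsAfter.comp Fin.rev_anti) (fun k => hL.flatsAfter_nonneg _)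
    (fun k => hM.flatsAfter_nonneg _) (congrArg Prod.snd h) k.rev

/-- `L - s`, raised so that (if `L` has at least `w` up-steps and `w` flat steps) its first `w`
steps go up from `L 0` and its last `w` steps stay flat at `L N`. -/
def surgery (s w : ℕ) (L : Fin (N+1) → ℤ) : Fin (N+1) → ℤ := fun j =>
  max (L j - s) (max (L 0 + min (j : ℤ) w) (L (Fin.last N) + min ((j : ℤ) - N + w) 0))

theorem _root_.IsBPath.surgery (hL : IsBPath N L) (s w : ℕ) : IsBPath N (surgery s w L) :=
  fun j => by
    have := hL j
    simp only [TwoLayer.surgery, Fin.val_succ, Fin.val_castSucc]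
    push_cast
    omega

theorem surgery_zero {s w : ℕ} (h : w ≤ flatsAfter L 0) : surgery s w L 0 = L 0 := by
  simp only [surgery, flatsAfter, Fin.val_zero, Nat.cast_zero] at h ⊢
  omega

theorem surgery_last {s w : ℕ} (h : w ≤ ups L (Fin.last N)) :
    surgery s w L (Fin.last N) = L (Fin.last N) := by
  simp only [surgery, ups, Fin.val_last] at h ⊢
  omega

theorem surgery_apply_of_le {s w : ℕ} {k : Fin (N+1)} (hu : ((s + w : ℕ) : ℤ) ≤ ups L k)
    (hf : ((s + w : ℕ) : ℤ) ≤ flatsAfter L k) : surgery s w L k = L k - s := by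
  simp only [surgery, ups, flatsAfter] at hu hf ⊢
  push_cast at hu hf
  omega

theorem eq_of_surgery_eq {s w : ℕ} (hLu : w ≤ ups L (Fin.last N)) (hLf : w ≤ flatsAfter L 0)
    (hMu : w ≤ ups M (Fin.last N)) (hMf : w ≤ flatsAfter M 0)
    (hT : surgery s w L = surgery s w M)
    (hdata : ∀ k, min (ups L k) (s + w : ℕ) = min (ups M k) (s + w : ℕ) ∧
      min (flatsAfter L k) (s + w : ℕ) = min (flatsAfter M k) (s + w : ℕ)) : L = M := by
  have h0 : L 0 = M 0 := by
    simpa [surgery_zero hLf, surgery_zero hMf] using congrFun hT 0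
  have hN : L (Fin.last N) = M (Fin.last N) := by
    simpa [surgery_last hLu, surgery_last hMu] using congrFun hT (Fin.last N)
  funext k
  have hk := congrFun hT k
  have hd := hdata k
  simp only [surgery, ups, flatsAfter] at hk hd
  push_cast at hd
  -- `L k` is `L 0 + ups L k` if `ups L k < s + w`, `L N - (N - k) + flatsAfter L k` if
  -- `flatsAfter L k < s + w`, and `surgery s w L k + s` otherwise; likewise for `M`
  omega

theorem surgery_le_surgery (h : ∀ j, M j ≤ L j) (c : ℕ) (j : Fin (N+1)) :
    surgery c 0 M j ≤ surgery 0 c L j := by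
  have := h j; have := h 0; have := h (Fin.last N)
  simp only [surgery]
  omega

theorem le_surgery_sub_surgery (h : ∀ j, M j ≤ L j) {c : ℕ} {k : Fin (N+1)}
    (hk : c ≤ (k : ℕ)) (hkN : (k : ℕ) + c ≤ N) :
    (c : ℤ) ≤ surgery 0 c L k - surgery c 0 M k := by
  have := h k; have := h 0; have := h (Fin.last N)
  simp only [surgery]
  omega

end Paths

abbrev Config (N : ℕ) := (Fin (N+1) → ℤ) × (Fin (N+1) → ℤ)

def separate (c : ℕ) (p : Config N) : Config N := (surgery 0 c p.1, surgery c 0 p.2)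

theorem separate_mem_TLset {c : ℕ} {p : Config N} (hp : p ∈ TLset N)
    (hf : c ≤ flatsAfter p.1 0) : separate c p ∈ TLset N :=
  ⟨(surgery_zero hf).trans hp.1, surgery_le_surgery hp.2.1 c, hp.2.2.1.surgery 0 c,
    hp.2.2.2.surgery c 0⟩

theorem twt0_separate (a b : ℝ) {c : ℕ} {p : Config N} (hp : p ∈ TLset N)
    (hu : c ≤ ups p.1 (Fin.last N)) (hf : c ≤ flatsAfter p.1 0) :
    twt0 N a b (separate c p) = twt0 N a b p := by
  have hu2 : ((0 : ℕ) : ℤ) ≤ ups p.2 (Fin.last N) := by simpa using hp.2.2.2.ups_nonneg _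
  have hf2 : ((0 : ℕ) : ℤ) ≤ flatsAfter p.2 0 := by simpa using hp.2.2.2.flatsAfter_nonneg _
  simp only [twt0, separate, surgery_zero hf, surgery_zero hf2, surgery_last hu, surgery_last hu2]

theorem card_filter_separate_le {c r : ℕ} (hrc : r < c) {p : Config N} (hp : p ∈ TLset N) :
    #{j | (separate c p).1 j - (separate c p).2 j ≤ (r : ℤ)} ≤ 2 * c := by
  refine le_trans (card_le_card fun j hj => ?_) (Fin.card_filter_lt_or_lt_add_le N c)
  simp only [mem_filter, mem_univ, true_and] at hj ⊢
  by_contra! hmid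
  have := le_surgery_sub_surgery hp.2.1 hmid.1 hmid.2
  simp only [separate] at hj
  omega

def pairData (c : ℕ) (p : Config N) : PathData N c × PathData N c :=
  (pathData c p.1, pathData c p.2)

theorem card_pathData_prod (N c : ℕ) :
    Fintype.card (PathData N c × PathData N c) = (N+2) ^ (4*c) := by
  simp only [Fintype.card_prod, Fintype.card_fun, Fintype.card_fin]
  ring

theorem separate_injOn (c : ℕ) :
    Set.InjOn (fun p => (separate c p, pairData c p))
      {p : Config N | p ∈ TLset N ∧ c ≤ ups p.1 (Fin.last N) ∧ c ≤ flatsAfter p.1 0} := by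
  rintro p ⟨hp, hpu, hpf⟩ q ⟨hq, hqu, hqf⟩ h
  obtain ⟨hsep, hdata⟩ := Prod.mk.inj h
  obtain ⟨h1, h2⟩ := Prod.mk.inj hsep
  obtain ⟨h3, h4⟩ := Prod.mk.inj hdata
  refine Prod.ext (eq_of_surgery_eq hpu hpf hqu hqf h1 fun k => ?_)
    (eq_of_surgery_eq (by simpa using hp.2.2.2.ups_nonneg _)
      (by simpa using hp.2.2.2.flatsAfter_nonneg _) (by simpa using hq.2.2.2.ups_nonneg _)
      (by simpa using hq.2.2.2.flatsAfter_nonneg _) h2 fun k => ?_)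
  · simpa using min_eq_min_of_pathData_eq hp.2.2.1 hq.2.2.1 h3 k
  · simpa using min_eq_min_of_pathData_eq hp.2.2.2 hq.2.2.2 h4 k

theorem heightTL_interp (L : Fin (N+1) → ℤ) {t : ℝ} (m : Fin N) (h1 : (m : ℝ) ≤ N * t)
    (h2 : N * t ≤ m + 1) :
    N * heightTL N L t = L m.castSucc + (N * t - m) * (L m.succ - L m.castSucc) := by
  have hN : (N : ℝ) ≠ 0 := by have := m.pos; positivity
  let g : ℕ → ℝ := fun k => L (Fin.clamp k N)
  have hg : ∀ k : Fin N, (L k.castSucc : ℝ) = g k ∧ (L k.succ : ℝ) = g (k + 1) := by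
    intro k
    have h : Fin.clamp k N = k.castSucc ∧ Fin.clamp (k + 1) N = k.succ :=
      ⟨Fin.ext (by simp [Fin.clamp]), Fin.ext (by simp [Fin.clamp])⟩
    simp only [g, h, and_self]
  have hsum : ∑ k : Fin N, ((L k.succ - L k.castSucc : ℤ) : ℝ) * min 1 (max 0 (N * t - k)) =
      ∑ k ∈ range N, (g (k + 1) - g k) * min 1 (max 0 (N * t - k)) := by
    rw [← Fin.sum_univ_eq_sum_range (fun k => (g (k + 1) - g k) * min 1 (max 0 (N * t - k)))]
    refine sum_congr rfl fun k _ => ?_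
    push_cast
    rw [(hg k).1, (hg k).2]
  have hbefore : ∑ k ∈ range m, (g (k + 1) - g k) * min 1 (max 0 (N * t - k)) = g m - g 0 := by
    rw [← sum_range_sub]
    refine sum_congr rfl fun k hk => ?_
    have : (k : ℝ) + 1 ≤ m := by exact_mod_cast mem_range.1 hk
    rw [max_eq_right (by linarith), min_eq_left (by linarith), mul_one]
  have hafter : ∑ k ∈ Ico (m : ℕ) N, (g (k + 1) - g k) * min 1 (max 0 (N * t - k)) =
      (g (m + 1) - g m) * (N * t - m) := by
    rw [sum_eq_single_of_mem (m : ℕ) (by simp) fun k hk hkm => ?_]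
    · rw [max_eq_right (by linarith), min_eq_right (by linarith)]
    · have : (m : ℝ) + 1 ≤ k := by
        have := mem_Ico.1 hk; exact_mod_cast (show (m : ℕ) + 1 ≤ k by omega)
      rw [max_eq_left (by linarith), min_eq_right zero_le_one, mul_zero]
  have h0 : (L 0 : ℝ) = g 0 := by simp [g, Fin.clamp]
  rw [heightTL, ← mul_assoc, mul_inv_cancel₀ hN, one_mul, hsum,
    ← sum_range_add_sum_Ico _ m.is_lt.le, hbefore, hafter, (hg m).1, (hg m).2, h0]
  ring

theorem heightTL_one (hN : 0 < N) (L : Fin (N+1) → ℤ) :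
    heightTL N L 1 = L (Fin.last N) / N := by
  obtain ⟨n, rfl⟩ := Nat.exists_eq_add_one_of_ne_zero hN.ne'
  have h := heightTL_interp L (Fin.last n) (t := 1) (by simp) (by simp)
  rw [Fin.succ_last] at h
  rw [eq_div_iff (by positivity), mul_comm, h]
  push_cast
  ring

section Heights

variable {L : Fin (N+1) → ℤ}

theorem lt_add_one_of_lt_heightTL (hL : IsBPath N L) {t u : ℝ} (m : Fin N)
    (h1 : (m : ℝ) ≤ N * t) (h2 : N * t ≤ m + 1) (hu : u < heightTL N L t) :
    N * u < L m.castSucc + 1 := by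
  have hN : (0 : ℝ) < N := by have := m.pos; positivity
  have hinterp := heightTL_interp L m h1 h2
  have hstep : (0 : ℝ) ≤ L m.succ - L m.castSucc ∧ (L m.succ : ℝ) - L m.castSucc ≤ 1 := by
    rcases hL m with h | h <;> rw [h] <;> push_cast <;> constructor <;> linarith
  nlinarith [mul_lt_mul_of_pos_left hu hN]

theorem heightTL_surgery_eq (hL : IsBPath N L) {c : ℕ} {t : ℝ} (m : Fin N)
    (h1 : (m : ℝ) ≤ N * t) (h2 : N * t ≤ m + 1) (hu : c ≤ ups L m.castSucc)
    (hf : c ≤ flatsAfter L m.succ) : heightTL N (surgery 0 c L) t = heightTL N L t := by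
  have hN : (N : ℝ) ≠ 0 := by have := m.pos; positivity
  have hle := Fin.castSucc_le_succ m
  have hcs : surgery 0 c L m.castSucc = L m.castSucc := by
    simpa using surgery_apply_of_le (s := 0) (by simpa using hu)
      (by simpa using hf.trans (hL.antitone_flatsAfter hle))
  have hs : surgery 0 c L m.succ = L m.succ := by
    simpa using surgery_apply_of_le (s := 0) (by simpa using hu.trans (hL.monotone_ups hle))
      (by simpa using hf)
  apply mul_left_cancel₀ hN
  rw [heightTL_interp _ m h1 h2, heightTL_interp _ m h1 h2, hcs, hs]

theorem exists_step_of_window (hL : IsBPath N L) (hL0 : L 0 = 0) {c : ℕ} {t u v : ℝ}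
    (ht0 : 0 < t) (ht1 : t < 1) (hu : u < heightTL N L t) (hv : (L (Fin.last N) : ℝ) < N * v)
    (hcu : c + 2 ≤ N * u) (hgap : c + 2 ≤ N * ((1 - t) - (v - u))) :
    ∃ m : Fin N, ((m : ℝ) ≤ N * t ∧ N * t ≤ m + 1) ∧ c ≤ ups L m.castSucc ∧
      c ≤ flatsAfter L m.succ := by
  have hN : 0 < N := by
    rcases Nat.eq_zero_or_pos N with rfl | h
    · simp at hcu; linarith
    · exact h
  have hNt : (⌊(N : ℝ) * t⌋₊ : ℝ) < N := by
    refine (Nat.floor_le (by positivity)).trans_lt ?_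
    have : (0 : ℝ) < N := by exact_mod_cast hN
    nlinarith
  let m : Fin N := ⟨⌊(N : ℝ) * t⌋₊, by exact_mod_cast hNt⟩
  have h1 : (m : ℝ) ≤ N * t := Nat.floor_le (by positivity)
  have h2 : N * t ≤ m + 1 := (Nat.lt_floor_add_one _).le
  have hm := lt_add_one_of_lt_heightTL hL m h1 h2 hu
  refine ⟨m, ⟨h1, h2⟩, ?_, ?_⟩
  · have : (c : ℝ) < L m.castSucc := by linarith
    have : (c : ℤ) < L m.castSucc := by exact_mod_cast this
    simp only [ups, hL0]
    omega
  · have hstep := (hL m)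
    have : ((c : ℤ) : ℝ) < ((N : ℤ) - m - 1 - L (Fin.last N) + L m.castSucc : ℤ) := by
      push_cast; nlinarith
    have : (c : ℤ) < (N : ℤ) - m - 1 - L (Fin.last N) + L m.castSucc := by exact_mod_cast this
    simp only [flatsAfter, Fin.val_succ]
    push_cast
    omega

end Heights

def windowEvent (N : ℕ) {d : ℕ} (θ u v : Fin (d+1) → ℝ) : Set (Config N) :=
  {p | ∀ j, heightTL N p.1 (θ j) ∈ Set.Ioo (u j) (v j)}

def sepEvent (N r K : ℕ) : Set (Config N) := {p | #{j | p.1 j - p.2 j ≤ (r : ℤ)} ≤ K}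

theorem separate_mem_windowEvent {d c : ℕ} (hd : 1 ≤ d) {θ u v : Fin (d+1) → ℝ}
    (hθ0 : 0 < θ 0) (hθmono : StrictMono θ) (hθlast : θ (Fin.last d) = 1)
    (hu : ∀ j, c + 2 ≤ N * u j)
    (hgap : ∀ j : Fin d, c + 2 ≤ N * ((1 - θ j.castSucc) - (v (Fin.last d) - u j.castSucc)))
    {p : Config N} (hp : p ∈ TLset N) (hval : p ∈ windowEvent N θ u v) :
    c ≤ ups p.1 (Fin.last N) ∧ c ≤ flatsAfter p.1 0 ∧
      separate c p ∈ windowEvent N θ u v := by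
  obtain ⟨h0, -, hL, -⟩ := hp
  have hN : 0 < N := by
    rcases Nat.eq_zero_or_pos N with rfl | h
    · have := hu 0; simp at this; linarith
    · exact h
  have hNR : (0 : ℝ) < N := by exact_mod_cast hN
  have hlast := hval (Fin.last d)
  rw [hθlast, heightTL_one hN, Set.mem_Ioo, lt_div_iff₀ hNR, div_lt_iff₀ hNR] at hlast
  have hsteps : ∀ i : Fin d, ∃ m : Fin N, ((m : ℝ) ≤ N * θ i.castSucc ∧
      N * θ i.castSucc ≤ m + 1) ∧ c ≤ ups p.1 m.castSucc ∧ c ≤ flatsAfter p.1 m.succ :=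
    fun i => exists_step_of_window hL h0 (hθ0.trans_le (hθmono.monotone (Fin.zero_le _)))
      (hθlast ▸ hθmono (Fin.castSucc_lt_last i)) (hval i.castSucc).1
      (by linarith) (hu _) (hgap i)
  have hup : c ≤ ups p.1 (Fin.last N) := by
    have : (c : ℝ) < p.1 (Fin.last N) := by linarith [hu (Fin.last d)]
    have : (c : ℤ) < p.1 (Fin.last N) := by exact_mod_cast this
    simp only [ups, h0]
    omega
  obtain ⟨_, -, -, hflat⟩ := hsteps ⟨0, hd⟩
  refine ⟨hup, hflat.trans (hL.antitone_flatsAfter (Fin.zero_le _)), fun j => ?_⟩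
  change heightTL N (surgery 0 c p.1) (θ j) ∈ _
  induction j using Fin.lastCases with
  | last =>
    rw [hθlast, heightTL_one hN, surgery_last hup, ← heightTL_one hN, ← hθlast]
    exact hval _
  | cast i =>
    obtain ⟨m, ⟨h1, h2⟩, hmu, hmf⟩ := hsteps i
    rw [heightTL_surgery_eq hL m h1 h2 hmu hmf]
    exact hval _

theorem twt0_nonneg {a b : ℝ} (ha : 0 ≤ a) (hb : 0 ≤ b) (p : Config N) :
    0 ≤ twt0 N a b p := by
  unfold twt0
  positivity

theorem Ptl0_nonneg {a b : ℝ} (ha : 0 ≤ a) (hb : 0 ≤ b) (S : Set (Config N)) :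
    0 ≤ Ptl0 N a b S :=
  div_nonneg (tsum_nonneg fun _ => Set.indicator_nonneg (fun q _ => twt0_nonneg ha hb q) _)
    (tsum_nonneg fun p => twt0_nonneg ha hb p.1)

theorem Ptl0_le_card_mul {a b : ℝ} (ha : 0 ≤ a) (hb : 0 ≤ b) {D : Type*} [Fintype D]
    {S T : Set (Config N)} (hTS : T ⊆ S) (f : Config N → Config N) (g : Config N → D)
    (hf : Set.MapsTo f (TLset N ∩ S) (TLset N ∩ T))
    (hwf : ∀ p ∈ TLset N ∩ S, twt0 N a b (f p) = twt0 N a b p)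
    (hinj : Set.InjOn (fun p => (f p, g p)) (TLset N ∩ S)) :
    Ptl0 N a b S ≤ Fintype.card D * Ptl0 N a b T := by
  have hw : 0 ≤ twt0 N a b := twt0_nonneg ha hb
  have hsum : ∀ X : Set (Config N), ∑' p : TLset N, X.indicator (twt0 N a b) p =
      ∑' p, (TLset N ∩ X).indicator (twt0 N a b) p := fun X => by
    rw [_root_.tsum_subtype, Set.indicator_indicator]
  rw [Ptl0, Ptl0, hsum, hsum, mul_div_assoc']
  exact div_le_div_of_nonneg_right
    (tsum_indicator_le_card_mul hw (Set.inter_subset_inter_right _ hTS) g hf hwf hinj)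
    (tsum_nonneg fun p => hw p)

theorem Ptl0_windowEvent_le_pow_mul {a b : ℝ} (ha : 0 ≤ a) (hb : 0 ≤ b) {d r K : ℕ}
    (hd : 1 ≤ d) {θ u v : Fin (d+1) → ℝ} (hθ0 : 0 < θ 0) (hθmono : StrictMono θ)
    (hθlast : θ (Fin.last d) = 1)
    (hu : ∀ j, (r + 1 : ℕ) + 2 ≤ N * u j)
    (hgap : ∀ j : Fin d,
      (r + 1 : ℕ) + 2 ≤ N * ((1 - θ j.castSucc) - (v (Fin.last d) - u j.castSucc)))
    (hK : 2 * (r + 1) ≤ K) :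
    Ptl0 N a b (windowEvent N θ u v) ≤
      ((N : ℝ) + 2) ^ (4 * (r + 1)) * Ptl0 N a b (sepEvent N r K ∩ windowEvent N θ u v) := by
  have hwin := fun p (hp : p ∈ TLset N ∩ windowEvent N θ u v) =>
    separate_mem_windowEvent hd hθ0 hθmono hθlast hu hgap hp.1 hp.2
  have hcount := Ptl0_le_card_mul ha hb (T := sepEvent N r K ∩ windowEvent N θ u v)
    Set.inter_subset_right (separate (r + 1)) (pairData (r + 1))
    (fun p hp => ⟨separate_mem_TLset hp.1 (hwin p hp).2.1,
      (card_filter_separate_le (Nat.lt_add_one r) hp.1).trans hK, (hwin p hp).2.2⟩)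
    (fun p hp => twt0_separate a b hp.1 (hwin p hp).1 (hwin p hp).2.1)
    ((separate_injOn (r + 1)).mono fun p hp => by exact ⟨hp.1, (hwin p hp).1, (hwin p hp).2.1⟩)
  rwa [card_pathData_prod, Nat.cast_pow, Nat.cast_add, Nat.cast_ofNat] at hcount

end TwoLayer

open TwoLayer in
theorem stmt9 (a b : ℝ) (ha : 0 ≤ a) (hb : 0 ≤ b)
    (d : ℕ) (hd : 1 ≤ d) (θ u v : Fin (d+1) → ℝ)
    (hθ0 : 0 < θ 0) (hθmono : StrictMono θ) (hθlast : θ (Fin.last d) = 1)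
    (hu0 : ∀ j, 0 < u j)
    (hgap : ∀ j : Fin d, v (Fin.last d) - u j.castSucc < 1 - θ j.castSucc)
    (r : ℕ) (ε : ℝ) (hε : 0 < ε) :
    ∃ N₀ : ℕ, ∀ N : ℕ, N₀ ≤ N →
      Ptl0 N a b
          ({p | (Finset.univ.filter (fun j : Fin (N+1) => p.1 j - p.2 j ≤ (r : ℤ))).card ≤
              Nat.ceil (ε * N)} ∩
            {p | ∀ j : Fin (d+1), heightTL N p.1 (θ j) ∈ Set.Ioo (u j) (v j)}) ≥
        Real.exp (-(N : ℝ) ^ ((4 : ℝ) / 5)) *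
          Ptl0 N a b {p | ∀ j : Fin (d+1), heightTL N p.1 (θ j) ∈ Set.Ioo (u j) (v j)} := by
  obtain ⟨N₀, hN₀⟩ := Filter.eventually_atTop.1 <|
    (Filter.eventually_all.2 fun j => eventually_le_natCast_mul ((r + 1 : ℕ) + 2) (hu0 j)).and <|
    (Filter.eventually_all.2 fun j =>
      eventually_le_natCast_mul ((r + 1 : ℕ) + 2) (sub_pos.2 (hgap j))).and <|
    (eventually_le_natCast_mul (2 * (r + 1) : ℕ) hε).and
      (eventually_pow_le_exp_rpow (4 * (r + 1)) (by norm_num : (0 : ℝ) < 4 / 5))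
  refine ⟨N₀, fun N hN => ?_⟩
  obtain ⟨hu, hgap', hεN, hexp⟩ := hN₀ N hN
  have hK : 2 * (r + 1) ≤ ⌈ε * N⌉₊ := by
    exact_mod_cast hεN.trans ((mul_comm _ _).le.trans (Nat.le_ceil _))
  have hcount := Ptl0_windowEvent_le_pow_mul ha hb hd hθ0 hθmono hθlast hu hgap' hK
  have hP := Ptl0_nonneg ha hb (sepEvent N r ⌈ε * N⌉₊ ∩ windowEvent N θ u v)
  calc Real.exp (-(N : ℝ) ^ ((4 : ℝ) / 5)) * Ptl0 N a b (windowEvent N θ u v)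
      ≤ Real.exp (-(N : ℝ) ^ ((4 : ℝ) / 5)) * (Real.exp ((N : ℝ) ^ ((4 : ℝ) / 5)) *
          Ptl0 N a b (sepEvent N r ⌈ε * N⌉₊ ∩ windowEvent N θ u v)) := by
        gcongr
        exact hcount.trans (mul_le_mul_of_nonneg_right hexp hP)
    _ = Ptl0 N a b (sepEvent N r ⌈ε * N⌉₊ ∩ windowEvent N θ u v) := by
        rw [← mul_assoc, ← Real.exp_add, neg_add_cancel, Real.exp_zero, one_mul]
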